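/- Let D be a triangulated category with coproducts and a compact generator G satisfying Hom_D(Σ^{-n}G, G) = 0 for all n ≫ 0. Then every t-structure in the preferred equivalence class (the class of the t-structure generated by G) is non-degenerate: the intersection of all D^{≤n} is zero and the intersection of all D^{≥n} is zero. -/

import Mathlib

open CategoryTheory CategoryTheory.Limits CategoryTheory.Pretriangulated
  CategoryTheory.Triangulated

universe v u

namespace GluePaper

variable {C : Type u} [Category.{v} C] [Preadditive C] [HasZeroObject C]
  [HasShift C ℤ] [∀ (n : ℤ), (shiftFunctor C n).Additive] [Pretriangulated C]

/-- `star A B` is the full subcategory `A ∗ B` of objects `x` admitting a distinguished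
triangle `a → x → b → a⟦1⟧` with `a ∈ A` and `b ∈ B`. -/
def star (A B : Set C) : Set C :=
  {x | ∃ (a b : C) (f : a ⟶ x) (g : x ⟶ b) (h : b ⟶ a⟦(1 : ℤ)⟧),
    Triangle.mk f g h ∈ (distTriang C) ∧ a ∈ A ∧ b ∈ B}

/-- There exists a distinguished triangle `E → X → D' → E⟦1⟧`. -/
def triExists (E X D' : C) : Prop :=
  ∃ (f : E ⟶ X) (g : X ⟶ D') (h : D' ⟶ E⟦(1 : ℤ)⟧),
    Triangle.mk f g h ∈ distTriang C

/-- `smd S` consists of all direct summands of objects of `S`. -/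
def smd (S : Set C) : Set C :=
  {X | ∃ (Y : C) (_ : Y ∈ S) (ι : X ⟶ Y) (π : Y ⟶ X), ι ≫ π = 𝟙 X}

/-- `addClosure S₀ = Add(S₀)`: all coproducts of objects of `S₀` (up to isomorphism). -/
def addClosure (S₀ : Set C) : Set C :=
  {X | ∃ (J : Type v) (f : J → C) (c : Cofan f), Nonempty (IsColimit c) ∧
    (∀ j, f j ∈ S₀) ∧ Nonempty (X ≅ c.pt)}

/-- `S` is closed under (small) coproducts. -/
def coprodClosed (S : Set C) : Prop :=
  ∀ (J : Type v) (f : J → C) (c : Cofan f), Nonempty (IsColimit c) →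
    (∀ j, f j ∈ S) → c.pt ∈ S

/-- `Coprod(S₀)`: the smallest full subcategory containing `S₀`, closed under coproducts
and under extensions. -/
def coprodClosure (S₀ : Set C) : Set C :=
  ⋂₀ {S : Set C | S₀ ⊆ S ∧ coprodClosed S ∧ star S S ⊆ S}

/-- The smallest full subcategory containing `S₀`, closed under coproducts, extensions and
direct summands. -/
def coprodSmdClosure (S₀ : Set C) : Set C :=
  ⋂₀ {S : Set C | S₀ ⊆ S ∧ coprodClosed S ∧ star S S ⊆ S ∧ smd S ⊆ S}

/-- `G[A,B]`: the objects `Σ^{-i} G = G⟦-i⟧` for `A ≤ i ≤ B`. -/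
def shiftSet (G : C) (A B : ℤ) : Set C :=
  {X | ∃ i : ℤ, A ≤ i ∧ i ≤ B ∧ Nonempty (X ≅ G⟦-i⟧)}

/-- `G(-∞,B]`: the objects `Σ^{-i} G = G⟦-i⟧` for `i ≤ B`. -/
def shiftSetLE (G : C) (B : ℤ) : Set C :=
  {X | ∃ i : ℤ, i ≤ B ∧ Nonempty (X ≅ G⟦-i⟧)}

/-- `Coprod_n(S₀)`, defined inductively: `Coprod_1(S₀) = Add(S₀)` and
`Coprod_{n+1}(S₀) = Add(S₀) ∗ Coprod_n(S₀)`.  (With the convention that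
`Coprod_0(S₀)` consists of the zero objects.) -/
def coprodN (S₀ : Set C) : ℕ → Set C
  | 0 => {X | IsZero X}
  | n + 1 => star (addClosure S₀) (coprodN S₀ n)

/-- `⟨G⟩_n^{[A,B]} = smd(Coprod_n(G[A,B]))`. -/
def shovel (G : C) (n : ℕ) (A B : ℤ) : Set C := smd (coprodN (shiftSet G A B) n)

/-- `⟨G⟩^{[A,B]} = smd(Coprod(G[A,B]))`. -/
def shovelInf (G : C) (A B : ℤ) : Set C := coprodSmdClosure (shiftSet G A B)

/-- The aisle `D_G^{≤0} = Coprod(G(-∞,0])` of the t-structure generated by `G`. -/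
def genAisle (G : C) : Set C := coprodClosure (shiftSetLE G 0)

/-- An object `X` is compact if `Hom(X,-)` commutes with coproducts. -/
def IsCompactObj (X : C) : Prop :=
  ∀ J : Type v, Nonempty (PreservesColimitsOfShape (Discrete J)
    (preadditiveCoyoneda.obj (Opposite.op X)))

/-- `G` is a compact generator. -/
def IsCompactGenerator (G : C) : Prop :=
  IsCompactObj G ∧ ∀ X : C, (∀ (n : ℤ) (f : G⟦n⟧ ⟶ X), f = 0) → IsZero X

/-- `Hom(Σ^{-n}G, H) = 0` for all `n ≫ 0`. -/
def homVanishEventually (G H : C) : Prop :=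
  ∃ N : ℤ, ∀ n ≥ N, ∀ f : G⟦-n⟧ ⟶ H, f = 0

/-- Two t-structures are equivalent if there is `A > 0` with
`D₁^{≤ -A} ⊆ D₂^{≤ 0} ⊆ D₁^{≤ A}`. -/
def tEquiv (t₁ t₂ : TStructure C) : Prop :=
  ∃ A : ℤ, 0 < A ∧ (∀ X : C, t₁.le (-A) X → t₂.le 0 X) ∧
    (∀ X : C, t₂.le 0 X → t₁.le A X)

/-- The t-structure `t` lies in the preferred equivalence class: it is equivalent to the
t-structure generated by the compact generator `G`, whose aisle is `Coprod(G(-∞,0])`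
(recall `X ∈ D_G^{≤ n}` iff `X⟦n⟧ ∈ Coprod(G(-∞,0])`). -/
def inPreferred (G : C) (t : TStructure C) : Prop :=
  ∃ A : ℤ, 0 < A ∧ (∀ X : C, X⟦(-A : ℤ)⟧ ∈ genAisle G → t.le 0 X) ∧
    (∀ X : C, t.le 0 X → X⟦(A : ℤ)⟧ ∈ genAisle G)

/-- `t` lies in the preferred equivalence class of t-structures (for some, equivalently any,
compact generator). -/
def inPreferredClass (t : TStructure C) : Prop :=
  ∃ G : C, IsCompactGenerator G ∧ inPreferred G t

/-- Weak approximability of a triangulated category with coproducts. -/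
def IsWeaklyApproximable : Prop :=
  ∃ (G : C) (t : TStructure C) (A : ℕ), 0 < A ∧ IsCompactGenerator G ∧
    t.le 0 (G⟦(A : ℤ)⟧) ∧
    (∀ X : C, t.le 0 X → ∀ f : G⟦(-A : ℤ)⟧ ⟶ X, f = 0) ∧
    (∀ X : C, t.le 0 X → ∃ E D' : C,
      E ∈ shovelInf G (-(A : ℤ)) (A : ℤ) ∧ t.le (-1) D' ∧ triExists E X D')

/-- Approximability of a triangulated category with coproducts. -/
def IsApproximable : Prop :=
  ∃ (G : C) (t : TStructure C) (A : ℕ), 0 < A ∧ IsCompactGenerator G ∧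
    t.le 0 (G⟦(A : ℤ)⟧) ∧
    (∀ X : C, t.le 0 X → ∀ f : G⟦(-A : ℤ)⟧ ⟶ X, f = 0) ∧
    (∀ X : C, t.le 0 X → ∃ E D' : C,
      E ∈ shovel G A (-(A : ℤ)) (A : ℤ) ∧ t.le (-1) D' ∧ triExists E X D')

/-- `D^- = ⋃ D^{≤ m}`. -/
def Dminus (t : TStructure C) : Set C := {X | ∃ m : ℤ, t.le m X}

/-- `D^+ = ⋃ D^{≥ -m}`. -/
def Dplus (t : TStructure C) : Set C := {X | ∃ m : ℤ, t.ge m X}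

/-- `D^-_c`: objects `X` such that for every `m > 0` there is a distinguished triangle
`E → X → E'` with `E` compact and `E' ∈ D^{≤ -m}`. -/
def DminusC (t : TStructure C) : Set C :=
  {X | ∀ m : ℤ, 0 < m → ∃ E E' : C, IsCompactObj E ∧ t.le (-m) E' ∧ triExists E X E'}

/-- `D^b_c = D^-_c ∩ D^b`. -/
def DbC (t : TStructure C) : Set C := DminusC t ∩ (Dminus t ∩ Dplus t)

/-- A set of objects is a thick triangulated subcategory. -/
def IsThickTriangulated (S : Set C) : Prop :=
  (∀ X : C, IsZero X → X ∈ S) ∧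
  (∀ X ∈ S, ∀ n : ℤ, X⟦n⟧ ∈ S) ∧
  (∀ T ∈ distTriang C, T.obj₁ ∈ S → T.obj₂ ∈ S → T.obj₃ ∈ S) ∧
  smd S ⊆ S

/-!
Choose `N` with `Hom(G⟦-n⟧, G) = 0` for all `n ≥ N`. As `G` is compact, the objects `Y` with
`Hom(G⟦-n⟧, Y) = 0` for all `n ≥ N` are closed under coproducts and extensions, and they include
`G(-∞,0]`; hence they include the whole aisle `D_G^{≤0}`. If `X ∈ D^{≤n}` for every `n`, then all
shifts of `X` lie in `D_G^{≤0}` because `t` is equivalent to the t-structure generated by `G`, so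
`Hom(G⟦j⟧, X) = 0` for all `j` and `X = 0` since `G` generates. Dually, every `G⟦j⟧` is bounded
above for `t`, so it admits no nonzero map to an object lying in every `D^{≥n}`.
-/

section

omit [HasZeroObject C] [Pretriangulated C]

noncomputable def shiftHomAddEquiv (X Y : C) (a b : ℤ) (h : a + b = 0) :
    (X ⟶ Y⟦b⟧) ≃+ (X⟦a⟧ ⟶ Y) where
  toEquiv := ((shiftEquiv' C a b h).toAdjunction.homEquiv X Y).symm
  map_add' f g := by
    change (f + g)⟦a⟧' ≫ _ = f⟦a⟧' ≫ _ + g⟦a⟧' ≫ _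
    rw [Functor.map_add]
    exact Preadditive.add_comp _ _ _ _ _ _

noncomputable def shiftCompPreadditiveCoyonedaIso (X : C) (a b : ℤ) (h : a + b = 0) :
    shiftFunctor C b ⋙ preadditiveCoyoneda.obj (Opposite.op X) ≅
      preadditiveCoyoneda.obj (Opposite.op (X⟦a⟧)) :=
  NatIso.ofComponents (fun Y => (shiftHomAddEquiv X Y a b h).toAddCommGrpIso)
    (fun f => by
      ext g
      exact (shiftEquiv' C a b h).toAdjunction.homEquiv_naturality_right_symm g f)

lemma IsCompactObj.shift {X : C} (hX : IsCompactObj X) (a : ℤ) : IsCompactObj (X⟦a⟧) :=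
  fun J => ⟨have := (hX J).some
    preservesColimitsOfShape_of_natIso
      (shiftCompPreadditiveCoyonedaIso X a (-a) (add_neg_cancel a))⟩

section

omit [HasShift C ℤ] [∀ (n : ℤ), (shiftFunctor C n).Additive]

lemma IsCompactObj.of_iso {X Y : C} (e : X ≅ Y) (hX : IsCompactObj X) : IsCompactObj Y :=
  fun J => ⟨have := (hX J).some
    preservesColimitsOfShape_of_natIso (preadditiveCoyoneda.mapIso e.symm.op)⟩

lemma IsCompactObj.eq_zero_of_isColimit {W : C} (hW : IsCompactObj W) {J : Type v}
    {f : J → C} {c : Cofan f} (hc : IsColimit c) (h : ∀ j (g : W ⟶ f j), g = 0)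
    (g : W ⟶ c.pt) : g = 0 := by
  have := (hW J).some
  let F := preadditiveCoyoneda.obj (Opposite.op W)
  have hid : 𝟙 (F.obj c.pt) = 0 :=
    (isColimitOfPreserves F hc).hom_ext fun j => by
      ext x
      obtain rfl : x = 0 := h j.as x
      simp
  exact congrArg (fun φ : F.obj c.pt ⟶ F.obj c.pt => φ.hom g) hid

lemma coprodClosed_rightOrthogonal (P : ObjectProperty C) (hP : ∀ W, P W → IsCompactObj W) :
    coprodClosed P.rightOrthogonal :=
  fun _ _ _ ⟨hc⟩ hf _ g hW => (hP _ hW).eq_zero_of_isColimit hc (fun j g => hf j g hW) g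

end

def shiftSetGE (G : C) (A : ℤ) : ObjectProperty C :=
  fun X => ∃ i : ℤ, A ≤ i ∧ Nonempty (X ≅ G⟦-i⟧)

omit [Preadditive C] [∀ (n : ℤ), (shiftFunctor C n).Additive] in
lemma shiftSetGE_shift {G W : C} {A : ℤ} (hW : shiftSetGE G A W) {a : ℤ} (ha : a ≤ 0) :
    shiftSetGE G A (W⟦a⟧) := by
  obtain ⟨i, hi, ⟨e⟩⟩ := hW
  exact ⟨i - a, by omega,
    ⟨(shiftFunctor C a).mapIso e ≪≫ (shiftFunctorAdd' C (-i) a (-(i - a)) (by omega)).symm.app G⟩⟩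

lemma isCompactObj_of_shiftSetGE {G W : C} (hG : IsCompactObj G) {A : ℤ}
    (hW : shiftSetGE G A W) : IsCompactObj W := by
  obtain ⟨i, -, ⟨e⟩⟩ := hW
  exact (hG.shift (-i)).of_iso e.symm

lemma rightOrthogonal_shiftSetGE_shift {G Y : C} {A : ℤ}
    (hY : (shiftSetGE G A).rightOrthogonal Y) {b : ℤ} (hb : 0 ≤ b) :
    (shiftSetGE G A).rightOrthogonal (Y⟦b⟧) := by
  intro W f hW
  rw [← (shiftHomAddEquiv W Y (-b) b (neg_add_cancel b)).map_eq_zero_iff]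
  exact hY _ (shiftSetGE_shift hW (by omega))

omit [∀ (n : ℤ), (shiftFunctor C n).Additive] in
lemma homVanishEventually.exists_rightOrthogonal {G H : C} (h : homVanishEventually G H) :
    ∃ N, (shiftSetGE G N).rightOrthogonal H := by
  obtain ⟨N, hN⟩ := h
  refine ⟨N, fun W f ⟨i, hi, ⟨e⟩⟩ => ?_⟩
  rw [← cancel_epi e.inv, comp_zero]
  exact hN i hi _

lemma shiftSetLE_subset_rightOrthogonal {G : C} {N : ℤ}
    (hG : (shiftSetGE G N).rightOrthogonal G) :
    shiftSetLE G 0 ⊆ (shiftSetGE G N).rightOrthogonal := by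
  rintro Y ⟨i, hi, ⟨e⟩⟩
  exact (shiftSetGE G N).rightOrthogonal.prop_of_iso e.symm
    (rightOrthogonal_shiftSetGE_shift hG (by omega))

end

lemma star_subset_of_isTriangulatedClosed₂ (P : ObjectProperty C) [P.IsTriangulatedClosed₂]
    [P.IsClosedUnderIsomorphisms] : star P P ⊆ P := by
  rintro _ ⟨_, _, _, _, _, hT, ha, hb⟩
  exact P.ext_of_isTriangulatedClosed₂ _ hT ha hb

lemma coprodClosure_subset {S₀ S : Set C} (h₀ : S₀ ⊆ S) (hc : coprodClosed S)
    (he : star S S ⊆ S) : coprodClosure S₀ ⊆ S :=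
  fun _ hX => hX S ⟨h₀, hc, he⟩

lemma subset_coprodClosure (S₀ : Set C) : S₀ ⊆ coprodClosure S₀ :=
  fun _ hX _ hS => hS.1 hX

lemma genAisle_subset_rightOrthogonal {G : C} (hG : IsCompactObj G) {N : ℤ}
    (hGG : (shiftSetGE G N).rightOrthogonal G) :
    genAisle G ⊆ (shiftSetGE G N).rightOrthogonal :=
  coprodClosure_subset (shiftSetLE_subset_rightOrthogonal hGG)
    (coprodClosed_rightOrthogonal _ fun _ => isCompactObj_of_shiftSetGE hG)
    (star_subset_of_isTriangulatedClosed₂ _)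

lemma isZero_of_forall_le_of_inPreferred {G : C} (hG : IsCompactGenerator G)
    (hvan : homVanishEventually G G) {t : TStructure C} (ht : inPreferred G t) {X : C}
    (hX : ∀ n, t.le n X) : IsZero X := by
  obtain ⟨N, hN⟩ := hvan.exists_rightOrthogonal
  obtain ⟨A, -, -, hle⟩ := ht
  have hshift : ∀ s, (shiftSetGE G N).rightOrthogonal (X⟦s⟧) := fun s =>
    (shiftSetGE G N).rightOrthogonal.prop_of_iso
      ((shiftFunctorAdd' C (s - A) A s (by omega)).symm.app X)
      (genAisle_subset_rightOrthogonal hG.1 hN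
        (hle _ (t.le_shift (s - A) (s - A) 0 (by omega) X (hX _))))
  refine hG.2 X fun j f => (shiftFunctor C (-N - j)).map_injective ?_
  rw [Functor.map_zero]
  exact hshift _ _
    ⟨N, le_rfl, ⟨(shiftFunctorAdd' C j (-N - j) (-N) (by omega)).symm.app G⟩⟩

lemma inPreferred.exists_le_shift {G : C} {t : TStructure C} (ht : inPreferred G t) (j : ℤ) :
    ∃ n, t.le n (G⟦j⟧) := by
  obtain ⟨A, -, hle, -⟩ := ht
  have hGA : t.le 0 (G⟦A⟧) := hle _ (subset_coprodClosure _
    ⟨0, le_rfl, ⟨(shiftFunctorAdd' C A (-A) (-0) (by omega)).symm.app G⟩⟩)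
  exact ⟨A - j, (t.le (A - j)).prop_of_iso
    ((shiftFunctorAdd' C A (j - A) j (by omega)).symm.app G)
    (t.le_shift 0 (j - A) (A - j) (by omega) _ hGA)⟩

lemma isZero_of_forall_ge_of_inPreferred {G : C} (hG : IsCompactGenerator G)
    {t : TStructure C} (ht : inPreferred G t) {X : C} (hX : ∀ n, t.ge n X) : IsZero X := by
  refine hG.2 X fun j f => ?_
  obtain ⟨n, hn⟩ := ht.exists_le_shift j
  exact t.zero_of_isLE_of_isGE f n (n + 1) (by omega) ⟨hn⟩ ⟨hX _⟩

theorem preferred_nondegenerate_general (G : C)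
    (hG : IsCompactGenerator G) (hvan : homVanishEventually G G)
    (t : TStructure C) (ht : inPreferred G t) :
    (∀ X : C, (∀ n : ℤ, t.le n X) → IsZero X) ∧
    (∀ X : C, (∀ n : ℤ, t.ge n X) → IsZero X) :=
  ⟨fun _ hX => isZero_of_forall_le_of_inPreferred hG hvan ht hX,
    fun _ hX => isZero_of_forall_ge_of_inPreferred hG ht hX⟩

/-- if `G` is a compact generator with `Hom(Σ^{-n}G, G) = 0` for `n ≫ 0`,
every t-structure in the preferred equivalence class is non-degenerate. -/
theorem preferred_nondegenerate [HasCoproducts.{v} C] (G : C)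
    (hG : IsCompactGenerator G) (hvan : homVanishEventually G G)
    (t : TStructure C) (ht : inPreferred G t) :
    (∀ X : C, (∀ n : ℤ, t.le n X) → IsZero X) ∧
    (∀ X : C, (∀ n : ℤ, t.ge n X) → IsZero X) :=
  preferred_nondegenerate_general G hG hvan t ht

end GluePaper
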